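/- Let ζ = e^{2πi/8}. The Rowell matrix R_ζ = X ⊕ Y, where X = (1/√2)·[[ζ⁻¹,0,−ζ⁻¹,0],[0,ζ,0,ζ],[ζ,0,ζ,0],[0,−ζ⁻¹,0,ζ⁻¹]] and Y = (1/√2)·[[ζ,0,ζ,0],[0,ζ⁻¹,0,−ζ⁻¹],[−ζ⁻¹,0,ζ⁻¹,0],[0,ζ,0,ζ]], is a unitary 8×8 matrix satisfying the (2,3,1)-generalized Yang–Baxter equation. -/
import Mathlib

open Matrix Complex
open scoped Kronecker

/-- `R ⊗ I₂`, reindexed as a 16×16 matrix. -/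
noncomputable def R1of (R : Matrix (Fin 8) (Fin 8) ℂ) : Matrix (Fin 16) (Fin 16) ℂ :=
  Matrix.reindex finProdFinEquiv finProdFinEquiv (R ⊗ₖ (1 : Matrix (Fin 2) (Fin 2) ℂ))

/-- `I₂ ⊗ R`, reindexed as a 16×16 matrix. -/
noncomputable def R2of (R : Matrix (Fin 8) (Fin 8) ℂ) : Matrix (Fin 16) (Fin 16) ℂ :=
  Matrix.reindex finProdFinEquiv finProdFinEquiv ((1 : Matrix (Fin 2) (Fin 2) ℂ) ⊗ₖ R)

/-- The (2,3,1)-generalized Yang–Baxter equation. -/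
def gYBE231 (R : Matrix (Fin 8) (Fin 8) ℂ) : Prop :=
  R1of R * R2of R * R1of R = R2of R * R1of R * R2of R

/-- Block diagonal sum `X ⊕ Y` of two 4×4 matrices, as an 8×8 matrix. -/
noncomputable def dSum (X Y : Matrix (Fin 4) (Fin 4) ℂ) : Matrix (Fin 8) (Fin 8) ℂ :=
  Matrix.reindex finSumFinEquiv finSumFinEquiv (Matrix.fromBlocks X 0 0 Y)

/-! ### Auxiliary: integer Gaussian version -/

def gi (a b : ℤ) : GaussianInt := ⟨a, b⟩

def SXg : Matrix (Fin 4) (Fin 4) GaussianInt :=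
  !![gi 1 (-1), 0, -gi 1 (-1), 0;
     0, gi 1 1, 0, gi 1 1;
     gi 1 1, 0, gi 1 1, 0;
     0, -gi 1 (-1), 0, gi 1 (-1)]

def SYg : Matrix (Fin 4) (Fin 4) GaussianInt :=
  !![gi 1 1, 0, gi 1 1, 0;
     0, gi 1 (-1), 0, -gi 1 (-1);
     -gi 1 (-1), 0, gi 1 (-1), 0;
     0, gi 1 1, 0, gi 1 1]

def Sg : Matrix (Fin 8) (Fin 8) GaussianInt :=
  Matrix.reindex finSumFinEquiv finSumFinEquiv (Matrix.fromBlocks SXg 0 0 SYg)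

def S1g : Matrix (Fin 16) (Fin 16) GaussianInt :=
  Matrix.reindex finProdFinEquiv finProdFinEquiv (Sg ⊗ₖ (1 : Matrix (Fin 2) (Fin 2) GaussianInt))

def S2g : Matrix (Fin 16) (Fin 16) GaussianInt :=
  Matrix.reindex finProdFinEquiv finProdFinEquiv ((1 : Matrix (Fin 2) (Fin 2) GaussianInt) ⊗ₖ Sg)

set_option maxHeartbeats 4000000 in
lemma gybe_int : S1g * S2g * S1g = S2g * S1g * S2g := by decide

set_option maxHeartbeats 4000000 in
lemma unit_int : Sg * Sg.conjTranspose = (4 : GaussianInt) • 1 := by decide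

/-! ### Transfer to ℂ -/

noncomputable abbrev gmap (M : Matrix (Fin 8) (Fin 8) GaussianInt) :
    Matrix (Fin 8) (Fin 8) ℂ := M.map GaussianInt.toComplex

lemma map_kron_one (M : Matrix (Fin 8) (Fin 8) GaussianInt) :
    (gmap M) ⊗ₖ (1 : Matrix (Fin 2) (Fin 2) ℂ) =
      (M ⊗ₖ (1 : Matrix (Fin 2) (Fin 2) GaussianInt)).map GaussianInt.toComplex := by
  ext ⟨i, k⟩ ⟨j, l⟩
  simp only [Matrix.kroneckerMap_apply, Matrix.one_apply, Matrix.map_apply]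
  split_ifs with h <;> simp

lemma map_one_kron (M : Matrix (Fin 8) (Fin 8) GaussianInt) :
    (1 : Matrix (Fin 2) (Fin 2) ℂ) ⊗ₖ (gmap M) =
      ((1 : Matrix (Fin 2) (Fin 2) GaussianInt) ⊗ₖ M).map GaussianInt.toComplex := by
  ext ⟨i, k⟩ ⟨j, l⟩
  simp only [Matrix.kroneckerMap_apply, Matrix.one_apply, Matrix.map_apply]
  split_ifs with h <;> simp

lemma R1of_gmap : R1of (gmap Sg) = S1g.map GaussianInt.toComplex := by
  rw [R1of, S1g, map_kron_one]
  simp [Matrix.reindex_apply, Matrix.submatrix_map]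

lemma R2of_gmap : R2of (gmap Sg) = S2g.map GaussianInt.toComplex := by
  rw [R2of, S2g, map_one_kron]
  simp [Matrix.reindex_apply, Matrix.submatrix_map]

lemma R1of_smul (c : ℂ) (M : Matrix (Fin 8) (Fin 8) ℂ) : R1of (c • M) = c • R1of M := by
  simp [R1of, Matrix.smul_kronecker, Matrix.reindex_apply, Matrix.submatrix_smul]

lemma R2of_smul (c : ℂ) (M : Matrix (Fin 8) (Fin 8) ℂ) : R2of (c • M) = c • R2of M := by
  simp [R2of, Matrix.kronecker_smul, Matrix.reindex_apply, Matrix.submatrix_smul]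

lemma gybe_smul_gmap : gYBE231 ((2 : ℂ)⁻¹ • gmap Sg) := by
  unfold gYBE231
  rw [R1of_smul, R2of_smul, R1of_gmap, R2of_gmap]
  simp only [smul_mul_assoc, mul_smul_comm, smul_smul]
  rw [← Matrix.map_mul, ← Matrix.map_mul, ← Matrix.map_mul, ← Matrix.map_mul, gybe_int]

lemma unitary_smul_gmap : (2 : ℂ)⁻¹ • gmap Sg ∈ Matrix.unitaryGroup (Fin 8) ℂ := by
  rw [Matrix.mem_unitaryGroup_iff]
  have hstar : star ((2 : ℂ)⁻¹ • gmap Sg) = (2 : ℂ)⁻¹ • (Sg.conjTranspose.map GaussianInt.toComplex) := by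
    have h1 : (gmap Sg)ᴴ = Sg.conjTranspose.map GaussianInt.toComplex :=
      (Matrix.conjTranspose_map GaussianInt.toComplex
        (fun a => (GaussianInt.toComplex_star a))).symm
    show ((2 : ℂ)⁻¹ • gmap Sg)ᴴ = _
    rw [Matrix.conjTranspose_smul, h1]
    norm_num
  rw [hstar, smul_mul_assoc, mul_smul_comm, smul_smul, ← Matrix.map_mul, unit_int]
  ext i j
  by_cases h : i = j <;>
    simp [Matrix.smul_apply, Matrix.one_apply, Matrix.map_apply, h, smul_eq_mul, map_ofNat] <;>
    norm_num

/-! ### The concrete matrix equals `(2 : ℂ)⁻¹ • gmap Sg` -/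

lemma dSum_smul (c : ℂ) (X Y : Matrix (Fin 4) (Fin 4) ℂ) :
    dSum (c • X) (c • Y) = c • dSum X Y := by
  unfold dSum
  rw [show (0 : Matrix (Fin 4) (Fin 4) ℂ) = c • (0 : Matrix (Fin 4) (Fin 4) ℂ) by simp,
    ← Matrix.fromBlocks_smul]
  simp [Matrix.reindex_apply, Matrix.submatrix_smul]

lemma gmap_Sg_eq : gmap Sg = dSum (SXg.map GaussianInt.toComplex) (SYg.map GaussianInt.toComplex) := by
  unfold dSum Sg gmap
  rw [Matrix.reindex_apply, Matrix.reindex_apply, ← Matrix.submatrix_map, Matrix.fromBlocks_map]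
  simp

lemma key_exp : Complex.exp (2 * Real.pi * I / 8) = (Real.sqrt 2 : ℂ) / 2 * (1 + I) := by
  have h8 : 2 * (Real.pi : ℂ) * I / 8 = (Real.pi / 4 : ℝ) * I := by push_cast; ring
  rw [h8, Complex.exp_mul_I, ← Complex.ofReal_cos, ← Complex.ofReal_sin,
    Real.cos_pi_div_four, Real.sin_pi_div_four]
  push_cast
  ring

lemma sqrt2_sq : (Real.sqrt 2 : ℂ) * (Real.sqrt 2 : ℂ) = 2 := by
  norm_cast
  exact Real.mul_self_sqrt (by norm_num)

lemma sqrt2_ne : (Real.sqrt 2 : ℂ) ≠ 0 := by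
  intro h
  have := sqrt2_sq
  rw [h] at this
  norm_num at this

lemma key_exp_inv : (Complex.exp (2 * Real.pi * I / 8))⁻¹ = (Real.sqrt 2 : ℂ) / 2 * (1 - I) := by
  have h : Complex.exp (2 * Real.pi * I / 8) * ((Real.sqrt 2 : ℂ) / 2 * (1 - I)) = 1 := by
    rw [key_exp]
    linear_combination ((1 - I^2)/4) * sqrt2_sq + (-(1/2) : ℂ) * Complex.I_sq
  exact inv_eq_of_mul_eq_one_right h

lemma se : (Real.sqrt 2 : ℂ)⁻¹ * Complex.exp (2 * Real.pi * I / 8) = (1 + I) / 2 := by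
  rw [key_exp]
  field_simp

lemma sei : (Real.sqrt 2 : ℂ)⁻¹ * (Complex.exp (2 * Real.pi * I / 8))⁻¹ = (1 - I) / 2 := by
  rw [key_exp_inv]
  field_simp

theorem rowell_solution_unitary_gYBE :
    dSum
        ((Real.sqrt 2 : ℂ)⁻¹ • !![(Complex.exp (2 * Real.pi * I / 8))⁻¹, 0, -(Complex.exp (2 * Real.pi * I / 8))⁻¹, 0;
          0, Complex.exp (2 * Real.pi * I / 8), 0, Complex.exp (2 * Real.pi * I / 8);
          Complex.exp (2 * Real.pi * I / 8), 0, Complex.exp (2 * Real.pi * I / 8), 0;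
          0, -(Complex.exp (2 * Real.pi * I / 8))⁻¹, 0, (Complex.exp (2 * Real.pi * I / 8))⁻¹])
        ((Real.sqrt 2 : ℂ)⁻¹ • !![Complex.exp (2 * Real.pi * I / 8), 0, Complex.exp (2 * Real.pi * I / 8), 0;
          0, (Complex.exp (2 * Real.pi * I / 8))⁻¹, 0, -(Complex.exp (2 * Real.pi * I / 8))⁻¹;
          -(Complex.exp (2 * Real.pi * I / 8))⁻¹, 0, (Complex.exp (2 * Real.pi * I / 8))⁻¹, 0;
          0, Complex.exp (2 * Real.pi * I / 8), 0, Complex.exp (2 * Real.pi * I / 8)])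
      ∈ Matrix.unitaryGroup (Fin 8) ℂ ∧
    gYBE231 (dSum
        ((Real.sqrt 2 : ℂ)⁻¹ • !![(Complex.exp (2 * Real.pi * I / 8))⁻¹, 0, -(Complex.exp (2 * Real.pi * I / 8))⁻¹, 0;
          0, Complex.exp (2 * Real.pi * I / 8), 0, Complex.exp (2 * Real.pi * I / 8);
          Complex.exp (2 * Real.pi * I / 8), 0, Complex.exp (2 * Real.pi * I / 8), 0;
          0, -(Complex.exp (2 * Real.pi * I / 8))⁻¹, 0, (Complex.exp (2 * Real.pi * I / 8))⁻¹])
        ((Real.sqrt 2 : ℂ)⁻¹ • !![Complex.exp (2 * Real.pi * I / 8), 0, Complex.exp (2 * Real.pi * I / 8), 0;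
          0, (Complex.exp (2 * Real.pi * I / 8))⁻¹, 0, -(Complex.exp (2 * Real.pi * I / 8))⁻¹;
          -(Complex.exp (2 * Real.pi * I / 8))⁻¹, 0, (Complex.exp (2 * Real.pi * I / 8))⁻¹, 0;
          0, Complex.exp (2 * Real.pi * I / 8), 0, Complex.exp (2 * Real.pi * I / 8)])) := by
  have hX : (Real.sqrt 2 : ℂ)⁻¹ • !![(Complex.exp (2 * Real.pi * I / 8))⁻¹, 0, -(Complex.exp (2 * Real.pi * I / 8))⁻¹, 0;
          0, Complex.exp (2 * Real.pi * I / 8), 0, Complex.exp (2 * Real.pi * I / 8);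
          Complex.exp (2 * Real.pi * I / 8), 0, Complex.exp (2 * Real.pi * I / 8), 0;
          0, -(Complex.exp (2 * Real.pi * I / 8))⁻¹, 0, (Complex.exp (2 * Real.pi * I / 8))⁻¹]
        = (2 : ℂ)⁻¹ • SXg.map GaussianInt.toComplex := by
    ext i j
    fin_cases i <;> fin_cases j <;>
      simp [SXg, gi, GaussianInt.toComplex_def', Matrix.smul_apply, Matrix.map_apply] <;>
      first
        | linear_combination se
        | linear_combination sei
        | linear_combination -se
        | linear_combination -sei
  have hY : (Real.sqrt 2 : ℂ)⁻¹ • !![Complex.exp (2 * Real.pi * I / 8), 0, Complex.exp (2 * Real.pi * I / 8), 0;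
          0, (Complex.exp (2 * Real.pi * I / 8))⁻¹, 0, -(Complex.exp (2 * Real.pi * I / 8))⁻¹;
          -(Complex.exp (2 * Real.pi * I / 8))⁻¹, 0, (Complex.exp (2 * Real.pi * I / 8))⁻¹, 0;
          0, Complex.exp (2 * Real.pi * I / 8), 0, Complex.exp (2 * Real.pi * I / 8)]
        = (2 : ℂ)⁻¹ • SYg.map GaussianInt.toComplex := by
    ext i j
    fin_cases i <;> fin_cases j <;>
      simp [SYg, gi, GaussianInt.toComplex_def', Matrix.smul_apply, Matrix.map_apply] <;>
      first
        | linear_combination se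
        | linear_combination sei
        | linear_combination -se
        | linear_combination -sei
  rw [hX, hY, dSum_smul, ← gmap_Sg_eq]
  exact ⟨unitary_smul_gmap, gybe_smul_gmap⟩
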